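/- In the setting X = Q + yμᵀ with Q ∈ ℝ^{n×p} of full row rank, A = QQᵀ, ν = Qμ, μ_⊥ = (I_p − QᵀA⁻¹Q)μ, and noisy labels ŷ ∈ {-1,1}^n with Δy := ŷ − y, the minimum-norm interpolator w_MNI = Xᵀ(XXᵀ)⁻¹ŷ satisfies S·μᵀw_MNI = (yᵀA⁻¹ŷ)‖μ_⊥‖² + (1 + νᵀA⁻¹y)·νᵀA⁻¹ŷ, where S = (1 + νᵀA⁻¹y)² + ‖μ_⊥‖²(yᵀA⁻¹y). -/

import Mathlib

/-!
Write `B = X Xᵀ = A + y νᵀ + ν yᵀ + ‖μ‖² y yᵀ`, a rank-two update of `A`, and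
`z = ‖μ_⊥‖² y + (1 + νᵀA⁻¹y) ν`. Since `‖μ_⊥‖² = ‖μ‖² - νᵀA⁻¹ν`, a direct expansion gives
`B A⁻¹ z = S • X μ`. When `B` is invertible, `S μᵀw = S (Xμ)ᵀB⁻¹ŷ = ŷᵀA⁻¹z`, which is the claim.
When `B` is singular, a vector `v ≠ 0` with `Xᵀv = 0` has `Qᵀv` parallel to `μ`; this forces
`μ_⊥ = 0` and `νᵀA⁻¹y = -1`, so the right-hand side vanishes, as does `w = 0` (the inverse of a
singular matrix is `0` in Mathlib).
-/

open Matrix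

namespace Matrix

variable {m n R 𝕜 : Type*}

theorem IsSymm.dotProduct_mulVec_comm [Fintype n] [CommSemiring R] {M : Matrix n n R}
    (hM : M.IsSymm) (u v : n → R) : u ⬝ᵥ M *ᵥ v = v ⬝ᵥ M *ᵥ u := by
  rw [dotProduct_mulVec, ← mulVec_transpose, hM.eq, dotProduct_comm]

theorem isSymm_mul_transpose [Fintype n] [CommSemiring R] (Q : Matrix m n R) :
    (Q * Qᵀ).IsSymm := by
  rw [IsSymm, transpose_mul, transpose_transpose]

theorem isUnit_det_of_rank_eq_card [Fintype n] [DecidableEq n] [Field 𝕜] {A : Matrix n n 𝕜}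
    (h : A.rank = Fintype.card n) : IsUnit A.det := by
  rw [← isUnit_iff_isUnit_det, ← mulVec_surjective_iff_isUnit]
  refine (LinearMap.range_eq_top (f := A.mulVecLin)).mp (Submodule.eq_top_of_finrank_eq ?_)
  rw [← rank, h, Module.finrank_fintype_fun_eq_card]

section RankOneUpdate

variable [CommRing R] (Q : Matrix m n R) (y : m → R) (μ : n → R)

theorem add_vecMulVec_mulVec [Fintype n] (s : n → R) :
    (Q + vecMulVec y μ) *ᵥ s = Q *ᵥ s + (μ ⬝ᵥ s) • y := by
  rw [add_mulVec, vecMulVec_mulVec, op_smul_eq_smul]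

theorem transpose_add_vecMulVec_mulVec [Fintype m] (r : m → R) :
    (Q + vecMulVec y μ)ᵀ *ᵥ r = Qᵀ *ᵥ r + (y ⬝ᵥ r) • μ := by
  rw [transpose_add, transpose_vecMulVec, add_vecMulVec_mulVec]

variable [Fintype m] [Fintype n]

theorem mul_transpose_add_vecMulVec_mulVec (r : m → R) :
    ((Q + vecMulVec y μ) * (Q + vecMulVec y μ)ᵀ) *ᵥ r
      = (Q * Qᵀ) *ᵥ r + (Q *ᵥ μ ⬝ᵥ r + (μ ⬝ᵥ μ) * (y ⬝ᵥ r)) • y + (y ⬝ᵥ r) • Q *ᵥ μ := by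
  rw [← mulVec_mulVec, transpose_add_vecMulVec_mulVec, mulVec_add, mulVec_smul,
    add_vecMulVec_mulVec, add_vecMulVec_mulVec, dotProduct_transpose_mulVec, mulVec_mulVec,
    dotProduct_comm r]
  ext i
  simp only [Pi.add_apply, Pi.smul_apply, smul_eq_mul]
  ring

variable [DecidableEq m]

theorem dotProduct_self_sub_transpose_mulVec_inv (hQ : IsUnit (Q * Qᵀ).det) :
    (μ - Qᵀ *ᵥ ((Q * Qᵀ)⁻¹ *ᵥ (Q *ᵥ μ))) ⬝ᵥ (μ - Qᵀ *ᵥ ((Q * Qᵀ)⁻¹ *ᵥ (Q *ᵥ μ)))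
      = μ ⬝ᵥ μ - Q *ᵥ μ ⬝ᵥ (Q * Qᵀ)⁻¹ *ᵥ (Q *ᵥ μ) := by
  set v := (Q * Qᵀ)⁻¹ *ᵥ (Q *ᵥ μ)
  have hcross : μ ⬝ᵥ Qᵀ *ᵥ v = Q *ᵥ μ ⬝ᵥ v := by
    rw [dotProduct_transpose_mulVec, dotProduct_comm]
  have hproj : Qᵀ *ᵥ v ⬝ᵥ Qᵀ *ᵥ v = Q *ᵥ μ ⬝ᵥ v := by
    rw [dotProduct_transpose_mulVec, mulVec_mulVec, mulVec_mulVec, mul_nonsing_inv _ hQ,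
      one_mulVec, dotProduct_comm]
  rw [dotProduct_sub, sub_dotProduct, sub_dotProduct, hproj, dotProduct_comm (Qᵀ *ᵥ v), hcross]
  ring

variable {Q y μ}

theorem mul_transpose_mulVec_inv_mulVec_eq_smul {X : Matrix m n R} {A : Matrix m m R}
    {ν : m → R} (hX : X = Q + vecMulVec y μ) (hA : A = Q * Qᵀ) (hAdet : IsUnit A.det)
    (hν : ν = Q *ᵥ μ) :
    (X * Xᵀ) *ᵥ (A⁻¹ *ᵥ ((μ ⬝ᵥ μ - ν ⬝ᵥ A⁻¹ *ᵥ ν) • y + (1 + ν ⬝ᵥ A⁻¹ *ᵥ y) • ν))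
      = ((1 + ν ⬝ᵥ A⁻¹ *ᵥ y) ^ 2 + (μ ⬝ᵥ μ - ν ⬝ᵥ A⁻¹ *ᵥ ν) * (y ⬝ᵥ A⁻¹ *ᵥ y)) • (X *ᵥ μ) := by
  subst hX hν
  have hsymm : A⁻¹.IsSymm := hA ▸ (isSymm_mul_transpose Q).inv
  set ν := Q *ᵥ μ
  set k := μ ⬝ᵥ μ - ν ⬝ᵥ A⁻¹ *ᵥ ν
  set b := ν ⬝ᵥ A⁻¹ *ᵥ y
  have hyz : y ⬝ᵥ A⁻¹ *ᵥ (k • y + (1 + b) • ν) = k * (y ⬝ᵥ A⁻¹ *ᵥ y) + (1 + b) * b := by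
    rw [mulVec_add, mulVec_smul, mulVec_smul, dotProduct_add, dotProduct_smul, dotProduct_smul,
      hsymm.dotProduct_mulVec_comm y ν, smul_eq_mul, smul_eq_mul]
  have hνz : ν ⬝ᵥ A⁻¹ *ᵥ (k • y + (1 + b) • ν) = k * b + (1 + b) * (ν ⬝ᵥ A⁻¹ *ᵥ ν) := by
    rw [mulVec_add, mulVec_smul, mulVec_smul, dotProduct_add, dotProduct_smul, dotProduct_smul,
      smul_eq_mul, smul_eq_mul]
  rw [mul_transpose_add_vecMulVec_mulVec, ← hA, mulVec_mulVec, mul_nonsing_inv _ hAdet,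
    one_mulVec, hyz, hνz, add_vecMulVec_mulVec]
  ext i
  simp only [k, Pi.add_apply, Pi.smul_apply, smul_eq_mul]
  ring

end RankOneUpdate

theorem sub_eq_zero_and_dotProduct_eq_neg_one_of_not_isUnit_det [Fintype m] [Fintype n]
    [DecidableEq m] [Field 𝕜] [LinearOrder 𝕜] [IsStrictOrderedRing 𝕜] {Q : Matrix m n 𝕜}
    {y : m → 𝕜} {μ : n → 𝕜} {X : Matrix m n 𝕜} {A : Matrix m m 𝕜} {ν : m → 𝕜}
    (hX : X = Q + vecMulVec y μ) (hA : A = Q * Qᵀ) (hAdet : IsUnit A.det) (hν : ν = Q *ᵥ μ)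
    (hXdet : ¬IsUnit (X * Xᵀ).det) :
    μ - Qᵀ *ᵥ (A⁻¹ *ᵥ ν) = 0 ∧ ν ⬝ᵥ A⁻¹ *ᵥ y = -1 := by
  obtain ⟨v, hv0, hXv⟩ : ∃ v ≠ 0, Xᵀ *ᵥ v = 0 := by
    obtain ⟨v, hv0, hv⟩ :=
      exists_mulVec_eq_zero_iff.mpr (by rwa [isUnit_iff_ne_zero, not_not] at hXdet)
    have hker := SetLike.ext_iff.mp (ker_mulVecLin_transpose_mul_self Xᵀ) v
    simp only [LinearMap.mem_ker, mulVecLin_apply, transpose_transpose] at hker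
    exact ⟨v, hv0, hker.mp hv⟩
  set t := y ⬝ᵥ v
  have hQv : Qᵀ *ᵥ v = (-t) • μ := by
    rw [hX, transpose_add_vecMulVec_mulVec, add_eq_zero_iff_eq_neg] at hXv
    rw [hXv, neg_smul]
  have hv : v = (-t) • A⁻¹ *ᵥ ν := calc
    v = A⁻¹ *ᵥ (A *ᵥ v) := by rw [mulVec_mulVec, nonsing_inv_mul _ hAdet, one_mulVec]
    _ = (-t) • A⁻¹ *ᵥ ν := by rw [hA, ← mulVec_mulVec, hQv, mulVec_smul, ← hν, mulVec_smul]
  have ht : -t ≠ 0 := by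
    rintro ht
    exact hv0 (by rw [hv, ht, zero_smul])
  constructor
  · have hAν : A⁻¹ *ᵥ ν = (-t)⁻¹ • v := by rw [hv, smul_smul, inv_mul_cancel₀ ht, one_smul]
    rw [hAν, mulVec_smul, hQv, smul_smul, inv_mul_cancel₀ ht, one_smul, sub_self]
  · have hsymm : A⁻¹.IsSymm := hA ▸ (isSymm_mul_transpose Q).inv
    have htb : t = -t * (ν ⬝ᵥ A⁻¹ *ᵥ y) := calc
      t = y ⬝ᵥ v := rfl
      _ = -t * (ν ⬝ᵥ A⁻¹ *ᵥ y) := by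
        rw [hv, dotProduct_smul, smul_eq_mul, hsymm.dotProduct_mulVec_comm]
    have : -t * (1 + ν ⬝ᵥ A⁻¹ *ᵥ y) = 0 := by linear_combination -htb
    linear_combination (mul_eq_zero.mp this).resolve_left ht

end Matrix

theorem stmt_14_general {n p : ℕ} (Q : Matrix (Fin n) (Fin p) ℝ) (hQ : Q.rank = n)
    (y yh : Fin n → ℝ)
    (μ : Fin p → ℝ)
    (X : Matrix (Fin n) (Fin p) ℝ) (hX : X = Q + Matrix.vecMulVec y μ)
    (A : Matrix (Fin n) (Fin n) ℝ) (hA : A = Q * Qᵀ)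
    (ν : Fin n → ℝ) (hν : ν = Q.mulVec μ)
    (mp : Fin p → ℝ) (hmp : mp = μ - Qᵀ.mulVec (A⁻¹.mulVec (Q.mulVec μ)))
    (S : ℝ)
    (hS : S = (1 + ν ⬝ᵥ A⁻¹.mulVec y) ^ 2 + (mp ⬝ᵥ mp) * (y ⬝ᵥ A⁻¹.mulVec y))
    (w : Fin p → ℝ) (hw : w = Xᵀ.mulVec ((X * Xᵀ)⁻¹.mulVec yh)) :
    S * (μ ⬝ᵥ w) = (y ⬝ᵥ A⁻¹.mulVec yh) * (mp ⬝ᵥ mp)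
        + (1 + ν ⬝ᵥ A⁻¹.mulVec y) * (ν ⬝ᵥ A⁻¹.mulVec yh) := by
  have hAdet : IsUnit A.det := isUnit_det_of_rank_eq_card (by
    rw [hA, rank_self_mul_transpose, hQ, Fintype.card_fin])
  have hAsymm : A⁻¹.IsSymm := hA ▸ (isSymm_mul_transpose Q).inv
  rw [← hν] at hmp
  by_cases hXdet : IsUnit (X * Xᵀ).det
  · have hk : mp ⬝ᵥ mp = μ ⬝ᵥ μ - ν ⬝ᵥ A⁻¹ *ᵥ ν := by
      rw [hmp, hA, hν, dotProduct_self_sub_transpose_mulVec_inv Q μ (hA ▸ hAdet)]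
    have : Invertible (X * Xᵀ) := invertibleOfIsUnitDet _ hXdet
    have hkey := inv_mulVec_eq_vec
      (mul_transpose_mulVec_inv_mulVec_eq_smul hX hA hAdet hν).symm
    rw [← hk, ← hS, mulVec_smul] at hkey
    calc S * (μ ⬝ᵥ w)
        = yh ⬝ᵥ S • (X * Xᵀ)⁻¹ *ᵥ (X *ᵥ μ) := by
          rw [hw, dotProduct_transpose_mulVec, dotProduct_comm,
            (isSymm_mul_transpose X).inv.dotProduct_mulVec_comm,
            dotProduct_smul, smul_eq_mul]
      _ = _ := by
          rw [hkey, mulVec_add, mulVec_smul, mulVec_smul, dotProduct_add, dotProduct_smul,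
            dotProduct_smul, hAsymm.dotProduct_mulVec_comm yh, hAsymm.dotProduct_mulVec_comm yh,
            smul_eq_mul, smul_eq_mul, mul_comm]
  · obtain ⟨hmp0, hb⟩ :=
      sub_eq_zero_and_dotProduct_eq_neg_one_of_not_isUnit_det hX hA hAdet hν hXdet
    rw [hw, nonsing_inv_apply_not_isUnit _ hXdet, hmp, hmp0, hb]
    simp

theorem stmt_14 {n p : ℕ} (Q : Matrix (Fin n) (Fin p) ℝ) (hQ : Q.rank = n)
    (y yh : Fin n → ℝ) (hy : ∀ i, y i = 1 ∨ y i = -1)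
    (hyh : ∀ i, yh i = 1 ∨ yh i = -1)
    (μ : Fin p → ℝ)
    (X : Matrix (Fin n) (Fin p) ℝ) (hX : X = Q + Matrix.vecMulVec y μ)
    (A : Matrix (Fin n) (Fin n) ℝ) (hA : A = Q * Qᵀ)
    (ν : Fin n → ℝ) (hν : ν = Q.mulVec μ)
    (Δy : Fin n → ℝ) (hΔy : Δy = yh - y)
    (mp : Fin p → ℝ) (hmp : mp = μ - Qᵀ.mulVec (A⁻¹.mulVec (Q.mulVec μ)))
    (S : ℝ)
    (hS : S = (1 + ν ⬝ᵥ A⁻¹.mulVec y) ^ 2 + (mp ⬝ᵥ mp) * (y ⬝ᵥ A⁻¹.mulVec y))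
    (w : Fin p → ℝ) (hw : w = Xᵀ.mulVec ((X * Xᵀ)⁻¹.mulVec yh)) :
    S * (μ ⬝ᵥ w) = (y ⬝ᵥ A⁻¹.mulVec yh) * (mp ⬝ᵥ mp)
        + (1 + ν ⬝ᵥ A⁻¹.mulVec y) * (ν ⬝ᵥ A⁻¹.mulVec yh) :=
  stmt_14_general Q hQ y yh μ X hX A hA ν hν mp hmp S hS w hw
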